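/- Let L be a first-order language with no relation symbols and let A be an L-structure. For every congruence equation (a pair (p, q) of formal terms in binary operation symbols ∧, ∨, ∘ over a set of variables), if the equation is satisfied by the second matrix power A^[2], then it is satisfied by A. Equivalently, if a congruence equation fails in A, then it fails in A^[2]. -/
import Mathlib


open FirstOrder FirstOrder.Language

/-- `α ⊗ β`: the binary relation on `A × A` relating `(a,b)` to `(c,d)` iff
`(a,c) ∈ α` and `(b,d) ∈ β`. -/
def otimes {A : Type*} (α β : Set (A × A)) : Set ((A × A) × (A × A)) :=
  {p | (p.1.1, p.2.1) ∈ α ∧ (p.1.2, p.2.2) ∈ β}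

/-- The `k`-ary operation `m_t` of the second matrix power `A^[2]`,
determined by a pair `t = (t₁, t₂)` of `L`-terms in `2k` variables
(the variables being indexed by `Fin k × Fin 2`, so that the variable `(j, i)`
receives the `i`-th coordinate of the `j`-th argument). -/
def mOp2 {L : FirstOrder.Language} {A : Type*} [L.Structure A] {k : ℕ}
    (t₁ t₂ : L.Term (Fin k × Fin 2)) (x : Fin k → A × A) : A × A :=
  (t₁.realize (fun p => ![(x p.1).1, (x p.1).2] p.2),
   t₂.realize (fun p => ![(x p.1).1, (x p.1).2] p.2))

/-- A congruence of an `L`-structure `A`: an equivalence relation compatible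
with every basic operation. -/
def IsCongruence (L : FirstOrder.Language) (A : Type*) [L.Structure A]
    (r : Set (A × A)) : Prop :=
  Equivalence (fun a b : A => (a, b) ∈ r) ∧
    ∀ (m : ℕ) (f : L.Functions m) (x y : Fin m → A),
      (∀ i, (x i, y i) ∈ r) →
        (Structure.funMap f x, Structure.funMap f y) ∈ r

/-- A congruence of the second matrix power `A^[2]`: an equivalence relation on
`A × A` compatible with every operation `m_t` (for every positive `k` and every
pair of terms in `2k` variables). -/
def IsCongruence2 (L : FirstOrder.Language) (A : Type*) [L.Structure A]
    (r : Set ((A × A) × (A × A))) : Prop :=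
  Equivalence (fun u v : A × A => (u, v) ∈ r) ∧
    ∀ (k : ℕ), 0 < k → ∀ (t₁ t₂ : L.Term (Fin k × Fin 2)) (x y : Fin k → A × A),
      (∀ j, (x j, y j) ∈ r) → (mOp2 t₁ t₂ x, mOp2 t₁ t₂ y) ∈ r


/-- The smallest congruence of `A` containing a binary relation `ρ`
(the congruence generated by `ρ`, `Θ_A(ρ)`). -/
def congClosure (L : FirstOrder.Language) (A : Type*) [L.Structure A]
    (ρ : Set (A × A)) : Set (A × A) :=
  {p | ∀ r : Set (A × A), IsCongruence L A r → ρ ⊆ r → p ∈ r}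

/-- The smallest congruence of the second matrix power `A^[2]` containing a
binary relation `ρ` on `A × A` (`Θ_{A^[2]}(ρ)`). -/
def congClosure2 (L : FirstOrder.Language) (A : Type*) [L.Structure A]
    (ρ : Set ((A × A) × (A × A))) : Set ((A × A) × (A × A)) :=
  {p | ∀ r : Set ((A × A) × (A × A)), IsCongruence2 L A r → ρ ⊆ r → p ∈ r}

/-- Relational composition of binary relations on a set. -/
def relComp {X : Type*} (α γ : Set (X × X)) : Set (X × X) :=
  {p | ∃ b, (p.1, b) ∈ α ∧ (b, p.2) ∈ γ}

/-- Formal terms of a congruence equation: built from variables using the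
binary symbols `∧`, `∨`, `∘`. -/
inductive CTerm (V : Type*) : Type _
  | var : V → CTerm V
  | meet : CTerm V → CTerm V → CTerm V
  | join : CTerm V → CTerm V → CTerm V
  | comp : CTerm V → CTerm V → CTerm V

/-- Evaluation of a congruence-equation term: variables are assigned binary
relations via `v`, `∧` is intersection, `∘` is relational composition, and the
join `μ ∨ ν` is `cl (μ ∪ ν)`, where `cl` is the relevant congruence-generation
operator. -/
def ceval {X V : Type*} (cl : Set (X × X) → Set (X × X)) (v : V → Set (X × X)) :
    CTerm V → Set (X × X)
  | CTerm.var x => v x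
  | CTerm.meet p q => ceval cl v p ∩ ceval cl v q
  | CTerm.join p q => cl (ceval cl v p ∪ ceval cl v q)
  | CTerm.comp p q => relComp (ceval cl v p) (ceval cl v q)

section Aux

variable {L : FirstOrder.Language} {A : Type*} [L.Structure A]

lemma subset_congClosure (ρ : Set (A × A)) : ρ ⊆ congClosure L A ρ :=
  fun _ hp _ _ hsub => hsub hp

lemma subset_congClosure2 (ρ : Set ((A × A) × (A × A))) : ρ ⊆ congClosure2 L A ρ :=
  fun _ hp _ _ hsub => hsub hp

lemma congClosure_min {ρ r : Set (A × A)} (hr : IsCongruence L A r) (hsub : ρ ⊆ r) :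
    congClosure L A ρ ⊆ r := fun _ hp => hp r hr hsub

lemma congClosure2_min {ρ r : Set ((A × A) × (A × A))} (hr : IsCongruence2 L A r)
    (hsub : ρ ⊆ r) : congClosure2 L A ρ ⊆ r := fun _ hp => hp r hr hsub

lemma congClosure_isCong (ρ : Set (A × A)) : IsCongruence L A (congClosure L A ρ) := by
  refine ⟨⟨fun a r hr _ => hr.1.refl a,
    fun h r hr hs => hr.1.symm (h r hr hs),
    fun h1 h2 r hr hs => hr.1.trans (h1 r hr hs) (h2 r hr hs)⟩,
    fun m f x y h r hr hs => hr.2 m f x y (fun i => h i r hr hs)⟩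

lemma congClosure2_isCong (ρ : Set ((A × A) × (A × A))) :
    IsCongruence2 L A (congClosure2 L A ρ) := by
  refine ⟨⟨fun a r hr _ => hr.1.refl a,
    fun h r hr hs => hr.1.symm (h r hr hs),
    fun h1 h2 r hr hs => hr.1.trans (h1 r hr hs) (h2 r hr hs)⟩,
    fun k hk t₁ t₂ x y h r hr hs => hr.2 k hk t₁ t₂ x y (fun j => h j r hr hs)⟩

lemma term_compat {γ : Set (A × A)} (hγ : IsCongruence L A γ) {ι : Type*}
    (t : L.Term ι) (x y : ι → A) (h : ∀ i, (x i, y i) ∈ γ) :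
    (t.realize x, t.realize y) ∈ γ := by
  induction t with
  | var i => exact h i
  | func f ts ih =>
      simp only [Term.realize]
      exact hγ.2 _ f _ _ (fun i => ih i)

lemma otimes_isCong2 {γ : Set (A × A)} (hγ : IsCongruence L A γ) :
    IsCongruence2 L A (otimes γ γ) := by
  constructor
  · exact ⟨fun u => ⟨hγ.1.refl u.1, hγ.1.refl u.2⟩,
      fun h => ⟨hγ.1.symm h.1, hγ.1.symm h.2⟩,
      fun h1 h2 => ⟨hγ.1.trans h1.1 h2.1, hγ.1.trans h1.2 h2.2⟩⟩
  · intro k _ t₁ t₂ x y hxy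
    have h : ∀ p : Fin k × Fin 2,
        ((fun p => ![(x p.1).1, (x p.1).2] p.2) p,
         (fun p => ![(y p.1).1, (y p.1).2] p.2) p) ∈ γ := by
      rintro ⟨j, i⟩
      fin_cases i
      · simpa using (hxy j).1
      · simpa using (hxy j).2
    exact ⟨term_compat hγ t₁ _ _ h, term_compat hγ t₂ _ _ h⟩

lemma ceval_refl {V : Type*} (v : V → Set (A × A)) (hv : ∀ x, IsCongruence L A (v x))
    (t : CTerm V) : ∀ a : A, (a, a) ∈ ceval (congClosure L A) v t := by
  induction t with
  | var x => exact fun a => (hv x).1.refl a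
  | meet p q ihp ihq => exact fun a => ⟨ihp a, ihq a⟩
  | join p q ihp ihq =>
      exact fun a => subset_congClosure _ (Set.mem_union_left _ (ihp a))
  | comp p q ihp ihq => exact fun a => ⟨a, ihp a, ihq a⟩

lemma join_key {α β : Set (A × A)} (hα : ∀ a : A, (a, a) ∈ α)
    (hβ : ∀ a : A, (a, a) ∈ β) :
    congClosure2 L A (otimes α α ∪ otimes β β) =
      otimes (congClosure L A (α ∪ β)) (congClosure L A (α ∪ β)) := by
  set γ := congClosure L A (α ∪ β) with hγdef
  have hγ : IsCongruence L A γ := congClosure_isCong _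
  set R := congClosure2 L A (otimes α α ∪ otimes β β) with hRdef
  have hR : IsCongruence2 L A R := congClosure2_isCong _
  apply Set.Subset.antisymm
  · refine congClosure2_min (otimes_isCong2 hγ) ?_
    rintro ⟨u, w⟩ (⟨h1, h2⟩ | ⟨h1, h2⟩)
    · exact ⟨subset_congClosure _ (Set.mem_union_left _ h1),
        subset_congClosure _ (Set.mem_union_left _ h2)⟩
    · exact ⟨subset_congClosure _ (Set.mem_union_right _ h1),
        subset_congClosure _ (Set.mem_union_right _ h2)⟩
  · -- the two auxiliary congruences
    have hScong : IsCongruence L A {ab : A × A | ∀ c : A, ((ab.1, c), (ab.2, c)) ∈ R} := by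
      constructor
      · exact ⟨fun a c => hR.1.refl _, fun h c => hR.1.symm (h c),
          fun h1 h2 c => hR.1.trans (h1 c) (h2 c)⟩
      · intro m f x y h c
        rcases Nat.eq_zero_or_pos m with hm | hm
        · subst hm
          have : x = y := funext (fun i => i.elim0)
          rw [this]
          exact hR.1.refl _
        · have := hR.2 m hm (Term.func f (fun i => Term.var (i, 0)))
            (Term.var ((⟨0, hm⟩ : Fin m), 1))
            (fun j => (x j, c)) (fun j => (y j, c))
            (fun j => h j c)
          simpa [mOp2, Term.realize] using this
    have hTcong : IsCongruence L A {cd : A × A | ∀ a : A, ((a, cd.1), (a, cd.2)) ∈ R} := by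
      constructor
      · exact ⟨fun a c => hR.1.refl _, fun h c => hR.1.symm (h c),
          fun h1 h2 c => hR.1.trans (h1 c) (h2 c)⟩
      · intro m f x y h a
        rcases Nat.eq_zero_or_pos m with hm | hm
        · subst hm
          have : x = y := funext (fun i => i.elim0)
          rw [this]
          exact hR.1.refl _
        · have := hR.2 m hm (Term.var ((⟨0, hm⟩ : Fin m), 0))
            (Term.func f (fun i => Term.var (i, 1)))
            (fun j => (a, x j)) (fun j => (a, y j))
            (fun j => h j a)
          simpa [mOp2, Term.realize] using this
    have hS : γ ⊆ {ab : A × A | ∀ c : A, ((ab.1, c), (ab.2, c)) ∈ R} := by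
      refine congClosure_min hScong ?_
      rintro ⟨a, b⟩ (hab | hab) <;> intro c
      · exact subset_congClosure2 _ (Set.mem_union_left _ ⟨hab, hα c⟩)
      · exact subset_congClosure2 _ (Set.mem_union_right _ ⟨hab, hβ c⟩)
    have hT : γ ⊆ {cd : A × A | ∀ a : A, ((a, cd.1), (a, cd.2)) ∈ R} := by
      refine congClosure_min hTcong ?_
      rintro ⟨a, b⟩ (hab | hab) <;> intro c
      · exact subset_congClosure2 _ (Set.mem_union_left _ ⟨hα c, hab⟩)
      · exact subset_congClosure2 _ (Set.mem_union_right _ ⟨hβ c, hab⟩)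
    rintro ⟨⟨a, c⟩, ⟨b, d⟩⟩ ⟨h1, h2⟩
    exact hR.1.trans (hS h1 c) (hT h2 b)

lemma ceval_otimes {V : Type*} (v : V → Set (A × A))
    (hv : ∀ x, IsCongruence L A (v x)) (t : CTerm V) :
    ceval (congClosure2 L A) (fun x => otimes (v x) (v x)) t =
      otimes (ceval (congClosure L A) v t) (ceval (congClosure L A) v t) := by
  induction t with
  | var x => rfl
  | meet p q ihp ihq =>
      simp only [ceval, ihp, ihq]
      ext ⟨⟨a, c⟩, ⟨b, d⟩⟩
      constructor
      · rintro ⟨⟨h1, h2⟩, ⟨h3, h4⟩⟩; exact ⟨⟨h1, h3⟩, ⟨h2, h4⟩⟩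
      · rintro ⟨⟨h1, h3⟩, ⟨h2, h4⟩⟩; exact ⟨⟨h1, h2⟩, ⟨h3, h4⟩⟩
  | join p q ihp ihq =>
      simp only [ceval, ihp, ihq]
      exact join_key (ceval_refl v hv p) (ceval_refl v hv q)
  | comp p q ihp ihq =>
      simp only [ceval, ihp, ihq]
      ext ⟨⟨a, c⟩, ⟨b, d⟩⟩
      constructor
      · rintro ⟨⟨e, f⟩, ⟨h1, h2⟩, ⟨h3, h4⟩⟩
        exact ⟨⟨e, h1, h3⟩, ⟨f, h2, h4⟩⟩
      · rintro ⟨⟨e, h1, h3⟩, ⟨f, h2, h4⟩⟩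
        exact ⟨(e, f), ⟨h1, h2⟩, ⟨h3, h4⟩⟩

end Aux

/-- if a congruence equation `(p, q)` is satisfied by the second
matrix power `A^[2]`, then it is satisfied by `A`. -/
theorem congruence_equation_of_matrix_power
    (L : FirstOrder.Language) (A : Type*) [L.Structure A]
    (hrel : ∀ n : ℕ, IsEmpty (L.Relations n))
    (V : Type*) (p q : CTerm V)
    (h2 : ∀ w : V → Set ((A × A) × (A × A)), (∀ x, IsCongruence2 L A (w x)) →
      ceval (congClosure2 L A) w p = ceval (congClosure2 L A) w q) :
    ∀ v : V → Set (A × A), (∀ x, IsCongruence L A (v x)) →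
      ceval (congClosure L A) v p = ceval (congClosure L A) v q := by
  intro v hv
  have hw : ∀ x, IsCongruence2 L A (otimes (v x) (v x)) :=
    fun x => otimes_isCong2 (hv x)
  have h := h2 (fun x => otimes (v x) (v x)) hw
  rw [ceval_otimes v hv p, ceval_otimes v hv q] at h
  ext ⟨a, b⟩
  have hp := ceval_refl v hv p a
  have hq := ceval_refl v hv q a
  constructor
  · intro hab
    have : ((a, a), (b, a)) ∈ otimes (ceval (congClosure L A) v p)
        (ceval (congClosure L A) v p) := ⟨hab, hp⟩
    rw [h] at this
    exact this.1
  · intro hab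
    have : ((a, a), (b, a)) ∈ otimes (ceval (congClosure L A) v q)
        (ceval (congClosure L A) v q) := ⟨hab, hq⟩
    rw [← h] at this
    exact this.1
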